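/- arXiv:1504.06107 — 4 statements merged into one kernel-verified Lean document; each statement's English description precedes it below -/
import Mathlib

section
/- Let $t > 0$, $b \in \mathbb{R}$, $x \in \mathbb{R}$, and $\phi : \mathbb{R} \to \mathbb{R}$ be a bounded continuous function. Let $W_t \sim \mathcal{N}(0, t)$. Then the map $x \mapsto \mathbb{E}[\phi(x + bt + W_t)]$ is differentiable and $\frac{d}{dx}\,\mathbb{E}\big[\phi(x + bt + W_t)\big] = \mathbb{E}\Big[\phi(x + bt + W_t)\,\frac{W_t}{t}\Big]$. -/
/-!
After translation, `E φ(y + W_t) = ∫ φ(u) p_t(u - y) du` with `p_t` the `N(0, t)` density, and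
`∂_y p_t(u - y) = (u - y)/t · p_t(u - y)`, so differentiating under the integral sign in the mean `y`
gives `E[φ(y + W_t) W_t / t]`. Differentiation under the integral is justified by domination: for
`|m - y| ≤ 1` the derivative in `m` is bounded by `C (|u - y| + 1) exp(-(u - y)² / 4t)`, which is
integrable.
-/

open MeasureTheory ProbabilityTheory Real
open scoped NNReal

namespace ProbabilityTheory

lemma hasDerivAt_gaussianPDFReal_mean (μ : ℝ) (v : ℝ≥0) (x : ℝ) :
    HasDerivAt (fun m ↦ gaussianPDFReal m v x) ((x - μ) / v * gaussianPDFReal μ v x) μ := by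
  refine HasDerivAt.congr_deriv ((((((hasDerivAt_id' μ).const_sub x).fun_pow 2).fun_neg.div_const
    (2 * (v : ℝ))).exp.const_mul (√(2 * π * v))⁻¹)) ?_
  simp only [gaussianPDFReal, Nat.cast_ofNat]
  ring

lemma gaussianPDFReal_le_of_abs_sub_le_one {μ m : ℝ} (v : ℝ≥0) (hm : |m - μ| ≤ 1) (x : ℝ) :
    gaussianPDFReal m v x ≤
      (√(2 * π * v))⁻¹ * rexp (1 / (2 * v)) * rexp (-(4 * (v : ℝ))⁻¹ * (x - μ) ^ 2) := by
  rw [gaussianPDFReal, mul_assoc _ (rexp _), ← exp_add]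
  gcongr
  -- `(x - μ)² ≤ 2 (x - m)² + 2 (m - μ)²`
  have hsq : (x - μ) ^ 2 ≤ 2 * (x - m) ^ 2 + 2 := by
    nlinarith [sq_nonneg (x - m - (m - μ)), sq_abs (m - μ), abs_nonneg (m - μ)]
  calc -(x - m) ^ 2 / (2 * v) = -(2 * (x - m) ^ 2) / (4 * v) := by ring
    _ ≤ (2 - (x - μ) ^ 2) / (4 * v) := by gcongr; linarith
    _ = 1 / (2 * v) + -(4 * (v : ℝ))⁻¹ * (x - μ) ^ 2 := by ring

noncomputable def gaussianMeanDerivMajorant (μ : ℝ) (v : ℝ≥0) (x : ℝ) : ℝ :=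
  (√(2 * π * v))⁻¹ * rexp (1 / (2 * v)) / v *
    ((|x - μ| + 1) * rexp (-(4 * (v : ℝ))⁻¹ * (x - μ) ^ 2))

lemma abs_deriv_gaussianPDFReal_mean_le {μ m : ℝ} (v : ℝ≥0) (hm : |m - μ| ≤ 1) (x : ℝ) :
    |(x - m) / v * gaussianPDFReal m v x| ≤ gaussianMeanDerivMajorant μ v x := by
  have hxm : |x - m| ≤ |x - μ| + 1 := by
    have := abs_sub_le x μ m
    rw [abs_sub_comm μ m] at this
    linarith
  calc |(x - m) / v * gaussianPDFReal m v x| = |x - m| / v * gaussianPDFReal m v x := by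
        rw [abs_mul, abs_div, NNReal.abs_eq, abs_of_nonneg (gaussianPDFReal_nonneg m v x)]
    _ ≤ (|x - μ| + 1) / v *
          ((√(2 * π * v))⁻¹ * rexp (1 / (2 * v)) * rexp (-(4 * (v : ℝ))⁻¹ * (x - μ) ^ 2)) :=
        mul_le_mul (by gcongr) (gaussianPDFReal_le_of_abs_sub_le_one v hm x)
          (gaussianPDFReal_nonneg m v x) (by positivity)
    _ = gaussianMeanDerivMajorant μ v x := by
        rw [gaussianMeanDerivMajorant]
        ring

lemma integrable_gaussianMeanDerivMajorant (μ : ℝ) {v : ℝ≥0} (hv : v ≠ 0) :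
    Integrable (gaussianMeanDerivMajorant μ v) := by
  have hb : 0 < (4 * (v : ℝ))⁻¹ := by
    have : (0 : ℝ) < v := NNReal.coe_pos.mpr (pos_iff_ne_zero.mpr hv)
    positivity
  have h : Integrable fun s : ℝ ↦ (|s| + 1) * rexp (-(4 * (v : ℝ))⁻¹ * s ^ 2) := by
    refine ((integrable_mul_exp_neg_mul_sq hb).norm.add (integrable_exp_neg_mul_sq hb)).congr
      (ae_of_all _ fun s ↦ ?_)
    simp [add_mul]
  exact (h.comp_sub_right μ).const_mul _

theorem hasDerivAt_integral_gaussianReal_mean {E : Type*} [NormedAddCommGroup E] [NormedSpace ℝ E]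
    {f : ℝ → E} (hf : AEStronglyMeasurable f) {C : ℝ} (hC : ∀ x, ‖f x‖ ≤ C) {v : ℝ≥0}
    (hv : v ≠ 0) (μ : ℝ) :
    HasDerivAt (fun m ↦ ∫ x, f x ∂gaussianReal m v)
      (∫ x, ((x - μ) / v) • f x ∂gaussianReal μ v) μ := by
  simp_rw [integral_gaussianReal_eq_integral_smul hv, smul_smul, mul_comm (gaussianPDFReal μ v _)]
  refine (hasDerivAt_integral_of_dominated_loc_of_deriv_le
    (F' := fun m x ↦ ((x - m) / v * gaussianPDFReal m v x) • f x)
    (bound := fun x ↦ gaussianMeanDerivMajorant μ v x * C)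
    (Metric.closedBall_mem_nhds μ one_pos)
    (.of_forall fun m ↦ (measurable_gaussianPDFReal m v).aestronglyMeasurable.smul hf)
    ((integrable_gaussianPDFReal μ v).smul_bdd C hf (ae_of_all _ hC))
    ((by fun_prop : Measurable fun x ↦ (x - μ) / v * gaussianPDFReal μ v x).aestronglyMeasurable.smul
      hf)
    (ae_of_all _ fun x m hm ↦ ?_)
    ((integrable_gaussianMeanDerivMajorant μ hv).mul_const C)
    (ae_of_all _ fun x m _ ↦ (hasDerivAt_gaussianPDFReal_mean m v x).smul_const (f x))).2
  rw [Metric.mem_closedBall, Real.dist_eq] at hm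
  have hbound := abs_deriv_gaussianPDFReal_mean_le v hm x
  rw [norm_smul, Real.norm_eq_abs]
  exact mul_le_mul hbound (hC x) (norm_nonneg _) ((abs_nonneg _).trans hbound)

lemma integral_gaussianReal_comp_const_add {E : Type*} [NormedAddCommGroup E] [NormedSpace ℝ E]
    (f : ℝ → E) (y μ : ℝ) (v : ℝ≥0) :
    ∫ x, f (y + x) ∂gaussianReal μ v = ∫ x, f x ∂gaussianReal (μ + y) v := by
  rw [← gaussianReal_map_const_add, (measurableEmbedding_addLeft y).integral_map]

end ProbabilityTheory

/-- Gaussian integration by parts (Bismut–Elworthy–Li) for first derivatives: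
for bounded continuous `φ`, `d/dx E[φ(x + bt + W_t)] = E[φ(x + bt + W_t) W_t / t]`
where `W_t ∼ N(0, t)`. -/
theorem gaussian_ibp_first_order
    (t b x : ℝ) (ht : 0 < t) (φ : ℝ → ℝ)
    (hφc : Continuous φ) (hφb : ∃ M, ∀ y, |φ y| ≤ M) :
    HasDerivAt (fun z => ∫ w, φ (z + b * t + w) ∂(gaussianReal 0 ⟨t, ht.le⟩))
      (∫ w, φ (x + b * t + w) * (w / t) ∂(gaussianReal 0 ⟨t, ht.le⟩)) x := by
  obtain ⟨M, hM⟩ := hφb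
  set v : ℝ≥0 := ⟨t, ht.le⟩
  have hv : v ≠ 0 := ne_of_gt ht
  have hval : ∫ w, φ (x + b * t + w) * (w / t) ∂gaussianReal 0 v =
      ∫ u, ((u - (x + b * t)) / v) • φ u ∂gaussianReal (0 + (x + b * t)) v := by
    rw [← integral_gaussianReal_comp_const_add]
    congr with w
    rw [add_sub_cancel_left, smul_eq_mul, mul_comm]
    rfl
  rw [hval]
  simpa only [integral_gaussianReal_comp_const_add φ, zero_add] using
    (hasDerivAt_integral_gaussianReal_mean hφc.aestronglyMeasurable hM hv _).comp_add_const x (b * t)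
end

section
/- Let $t > 0$, $c_1, c_2 \in \mathbb{R}$ with $c_2 \neq 0$, and $x \in \mathbb{R}$ with $c_1 + c_2 x \neq 0$. Let $W_t \sim \mathcal{N}(0,t)$ and $\overline{X}^x_t := -\frac{c_1}{c_2} + (\frac{c_1}{c_2} + x) e^{-c_2^2 t/2 + c_2 W_t}$. Then for every bounded continuous $\phi : \mathbb{R} \to \mathbb{R}$, the map $x \mapsto \mathbb{E}[\phi(\overline{X}^x_t)]$ is twice differentiable and $\frac{d^2}{dx^2}\, \mathbb{E}\big[\phi(\overline{X}^x_t)\big] = \mathbb{E}\Big[\phi(\overline{X}^x_t)\,\frac{1}{(c_1 + c_2 x)^2}\Big(-c_2\frac{W_t}{t} + \frac{W_t^2 - t}{t^2}\Big)\Big]$. -/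
/-!
Moving the starting point from `x` to `y` multiplies `c₁/c₂ + x` by `(c₁ + c₂y)/(c₁ + c₂x)`, which
for `y` near `x` amounts to shifting the Gaussian value `W_t` by
`h(y) = log ((c₁ + c₂y)/(c₁ + c₂x)) / c₂`. Hence `E[φ(X̄ʸ_t)] = ∫ ψ(u) p(u - h(y)) du`, where
`ψ = φ ∘ X̄ˣ_t` and `p` is the `N(0,t)` density, so every derivative in `y` falls on the smooth
kernel `p`. Differentiating under the integral, dominated by Gaussian tails, turns `-p'` and `p''`
into `p` times the Hermite weights `u/t` and `(u² - t)/t²`, and the second-order chain rule with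
`h' = (c₁ + c₂y)⁻¹`, `h'' = -c₂/(c₁ + c₂x)²` produces the weight of the statement.
-/

open MeasureTheory ProbabilityTheory Real Filter Topology
open scoped NNReal

lemma one_add_sq_mul_exp_neg_mul_sq_le {a : ℝ} (ha : 0 < a) (z : ℝ) :
    (1 + z ^ 2) * exp (-a * z ^ 2) ≤ (1 + 2 / a) * exp (-(a / 2) * z ^ 2) := by
  have hpoly : 1 + z ^ 2 ≤ (1 + 2 / a) * exp (a / 2 * z ^ 2) :=
    calc 1 + z ^ 2 ≤ (1 + 2 / a) * (a / 2 * z ^ 2 + 1) := by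
          field_simp; nlinarith [mul_nonneg (sq_nonneg a) (sq_nonneg z)]
      _ ≤ (1 + 2 / a) * exp (a / 2 * z ^ 2) := by gcongr; exact add_one_le_exp _
  have hcancel : exp (a / 2 * z ^ 2) * exp (-(a / 2) * z ^ 2) = 1 := by
    rw [← exp_add, ← exp_zero]; ring_nf
  have hsplit : exp (-a * z ^ 2) = exp (-(a / 2) * z ^ 2) * exp (-(a / 2) * z ^ 2) := by
    rw [← exp_add]; ring_nf
  calc (1 + z ^ 2) * exp (-a * z ^ 2)
      ≤ (1 + 2 / a) * exp (a / 2 * z ^ 2) * exp (-(a / 2) * z ^ 2) * exp (-(a / 2) * z ^ 2) := by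
        rw [hsplit, ← mul_assoc]; gcongr
    _ = (1 + 2 / a) * exp (-(a / 2) * z ^ 2) := by
        linear_combination (1 + 2 / a) * exp (-(a / 2) * z ^ 2) * hcancel

lemma gaussianPDFReal_zero_mean {v : ℝ≥0} (z : ℝ) :
    gaussianPDFReal 0 v z = (√(2 * π * v))⁻¹ * exp (-(1 / (2 * v)) * z ^ 2) := by
  rw [gaussianPDFReal, sub_zero]; congr 2; ring

lemma exists_abs_mul_gaussianPDFReal_le {v : ℝ≥0} (hv : v ≠ 0) {q : ℝ → ℝ} {K : ℝ}
    (hq : ∀ z, |q z| ≤ K * (1 + z ^ 2)) :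
    ∃ C, ∀ z, |q z * gaussianPDFReal 0 v z| ≤ C * exp (-(1 / (4 * v)) * z ^ 2) := by
  have hv' : (0 : ℝ) < v := by positivity
  have hK : 0 ≤ K := by simpa using (abs_nonneg _).trans (hq 0)
  refine ⟨K * (√(2 * π * v))⁻¹ * (1 + 2 / (1 / (2 * v))), fun z => ?_⟩
  have hexp := one_add_sq_mul_exp_neg_mul_sq_le (a := 1 / (2 * v)) (by positivity) z
  have hhalf : 1 / (2 * (v : ℝ)) / 2 = 1 / (4 * v) := by field_simp; ring
  rw [hhalf] at hexp
  rw [abs_mul, abs_of_nonneg (gaussianPDFReal_nonneg 0 v z), gaussianPDFReal_zero_mean]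
  calc |q z| * ((√(2 * π * v))⁻¹ * exp (-(1 / (2 * v)) * z ^ 2))
      ≤ K * (1 + z ^ 2) * ((√(2 * π * v))⁻¹ * exp (-(1 / (2 * v)) * z ^ 2)) := by
        gcongr; exact hq z
    _ = K * (√(2 * π * v))⁻¹ * ((1 + z ^ 2) * exp (-(1 / (2 * v)) * z ^ 2)) := by ring
    _ ≤ K * (√(2 * π * v))⁻¹ * ((1 + 2 / (1 / (2 * v))) * exp (-(1 / (4 * v)) * z ^ 2)) := by
        gcongr
    _ = _ := by ring

lemma abs_div_le_mul_one_add_sq (v : ℝ≥0) (z : ℝ) : |z / v| ≤ 1 / v * (1 + z ^ 2) := by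
  rw [abs_div, NNReal.abs_eq, div_eq_inv_mul, one_div]
  gcongr
  nlinarith [sq_nonneg (|z| - 1), sq_abs z]

lemma abs_sq_sub_div_sq_le_mul_one_add_sq (v : ℝ≥0) (z : ℝ) :
    |(z ^ 2 - v) / v ^ 2| ≤ (1 / v ^ 2 + 1 / v) * (1 + z ^ 2) := by
  rcases (zero_le (a := v)).eq_or_lt with hv | hv
  · simp [← hv]
  have hv' : (0 : ℝ) < v := hv
  rw [abs_div, abs_of_pos (pow_pos hv' 2), div_le_iff₀ (pow_pos hv' 2)]
  calc |z ^ 2 - v| ≤ z ^ 2 + v := abs_sub_le_iff.mpr ⟨by linarith, by nlinarith [sq_nonneg z]⟩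
    _ ≤ (1 / v ^ 2 + 1 / v) * (1 + z ^ 2) * v ^ 2 := by
        field_simp; nlinarith [sq_nonneg z, mul_nonneg hv'.le (sq_nonneg z)]

lemma integrable_mul_gaussianPDFReal {v : ℝ≥0} (hv : v ≠ 0) {q : ℝ → ℝ} {K : ℝ}
    (hq_meas : AEStronglyMeasurable q) (hq : ∀ z, |q z| ≤ K * (1 + z ^ 2)) :
    Integrable (fun z => q z * gaussianPDFReal 0 v z) := by
  obtain ⟨C, hC⟩ := exists_abs_mul_gaussianPDFReal_le hv hq
  exact Integrable.mono' ((integrable_exp_neg_mul_sq (by positivity)).const_mul C)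
    (hq_meas.mul (stronglyMeasurable_gaussianPDFReal 0 v).aestronglyMeasurable)
    (ae_of_all _ hC)

lemma hasDerivAt_gaussianPDFReal (v : ℝ≥0) (z : ℝ) :
    HasDerivAt (gaussianPDFReal 0 v) (-(z / v * gaussianPDFReal 0 v z)) z := by
  have hexponent : HasDerivAt (fun y : ℝ => -(y - 0) ^ 2 / (2 * v)) (-(2 * z) / (2 * v)) z := by
    simpa using (hasDerivAt_pow 2 z).neg.div_const (2 * (v : ℝ))
  rw [gaussianPDFReal_def]
  refine (hexponent.exp.const_mul _).congr_deriv ?_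
  by_cases hv : (v : ℝ) = 0
  · simp [hv]
  · field_simp

lemma hasDerivAt_div_mul_gaussianPDFReal (v : ℝ≥0) (z : ℝ) :
    HasDerivAt (fun z => z / v * gaussianPDFReal 0 v z)
      (-((z ^ 2 - v) / v ^ 2 * gaussianPDFReal 0 v z)) z := by
  refine (((hasDerivAt_id' z).div_const (v : ℝ)).mul
    (hasDerivAt_gaussianPDFReal v z)).congr_deriv ?_
  by_cases hv : (v : ℝ) = 0
  · simp [hv]
  · field_simp; ring

section Convolution

variable {ψ k k' : ℝ → ℝ} {M : ℝ}

lemma integrable_mul_comp_sub (hψ : AEStronglyMeasurable ψ) (hψM : ∀ u, |ψ u| ≤ M)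
    (hk : Integrable k) (s : ℝ) : Integrable (fun u => ψ u * k (u - s)) :=
  (hk.comp_sub_right s).bdd_mul hψ (ae_of_all _ hψM)

lemma abs_mul_comp_sub_le_of_mem_ball (hψM : ∀ u, |ψ u| ≤ M) {b C : ℝ} (hb : 0 ≤ b)
    (hk' : ∀ z, |k' z| ≤ C * exp (-b * z ^ 2)) {s r : ℝ} (hr : r ∈ Metric.ball s 1) (u : ℝ) :
    |ψ u * k' (u - r)| ≤ M * C * exp (b * (|s| + 1) ^ 2) * exp (-(b / 2) * u ^ 2) := by
  have hM : 0 ≤ M := (abs_nonneg _).trans (hψM 0)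
  have hC : 0 ≤ C := by simpa using (abs_nonneg _).trans (hk' 0)
  have hr' : r ^ 2 ≤ (|s| + 1) ^ 2 := by
    rw [Metric.mem_ball, Real.dist_eq] at hr
    have : |r| ≤ |s| + 1 := by linarith [abs_sub_abs_le_abs_sub r s]
    nlinarith [abs_nonneg r, sq_abs r]
  -- `u ^ 2 ≤ 2 (u - r) ^ 2 + 2 r ^ 2` moves the Gaussian factor from `u - r` to `u`
  have hexp : -b * (u - r) ^ 2 ≤ b * (|s| + 1) ^ 2 + -(b / 2) * u ^ 2 := by
    nlinarith [mul_nonneg hb (sq_nonneg (u - 2 * r))]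
  calc |ψ u * k' (u - r)| = |ψ u| * |k' (u - r)| := abs_mul _ _
    _ ≤ M * (C * exp (-b * (u - r) ^ 2)) := by
        gcongr
        · exact hψM u
        · exact hk' _
    _ ≤ M * (C * exp (b * (|s| + 1) ^ 2 + -(b / 2) * u ^ 2)) := by gcongr
    _ = _ := by rw [exp_add]; ring

theorem hasDerivAt_integral_mul_comp_sub (hψ : AEStronglyMeasurable ψ) (hψM : ∀ u, |ψ u| ≤ M)
    (hk : ∀ z, HasDerivAt k (k' z) z) (hki : Integrable k) {b C : ℝ} (hb : 0 < b)
    (hk' : ∀ z, |k' z| ≤ C * exp (-b * z ^ 2)) (s : ℝ) :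
    HasDerivAt (fun r => ∫ u, ψ u * k (u - r)) (-∫ u, ψ u * k' (u - s)) s := by
  have hk'_meas : Measurable k' := by
    rw [show k' = deriv k from funext fun z => (hk z).deriv.symm]; exact measurable_deriv k
  have hbound : ∀ u, ∀ r ∈ Metric.ball s 1, ‖ψ u * -k' (u - r)‖ ≤
      M * C * exp (b * (|s| + 1) ^ 2) * exp (-(b / 2) * u ^ 2) := fun u r hr => by
    simpa only [mul_neg, norm_neg, Real.norm_eq_abs] using
      abs_mul_comp_sub_le_of_mem_ball hψM hb.le hk' hr u
  have hderiv := hasDerivAt_integral_of_dominated_loc_of_deriv_le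
    (F := fun r u => ψ u * k (u - r)) (F' := fun r u => ψ u * -k' (u - r))
    (Metric.ball_mem_nhds s one_pos)
    (Eventually.of_forall fun r => (integrable_mul_comp_sub hψ hψM hki r).aestronglyMeasurable)
    (integrable_mul_comp_sub hψ hψM hki s)
    (hψ.mul (hk'_meas.comp (measurable_id.sub_const s)).neg.aestronglyMeasurable)
    (ae_of_all _ hbound) ((integrable_exp_neg_mul_sq (by positivity)).const_mul _)
    (ae_of_all _ fun u r _ => ((hk (u - r)).comp r ((hasDerivAt_id r).const_sub u)).const_mul (ψ u)
      |>.congr_deriv (by simp))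
  simpa [integral_neg] using hderiv.2

end Convolution

section GaussianKernel

variable {v : ℝ≥0} {ψ : ℝ → ℝ} {M : ℝ}

theorem hasDerivAt_integral_mul_gaussianPDFReal_comp_sub (hv : v ≠ 0)
    (hψ : AEStronglyMeasurable ψ) (hψM : ∀ u, |ψ u| ≤ M) (s : ℝ) :
    HasDerivAt (fun r => ∫ u, ψ u * gaussianPDFReal 0 v (u - r))
      (∫ u, ψ u * ((u - s) / v * gaussianPDFReal 0 v (u - s))) s := by
  obtain ⟨C, hC⟩ := exists_abs_mul_gaussianPDFReal_le hv (abs_div_le_mul_one_add_sq v)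
  simpa [integral_neg] using hasDerivAt_integral_mul_comp_sub hψ hψM
    (hasDerivAt_gaussianPDFReal v) (integrable_gaussianPDFReal 0 v) (by positivity)
    (fun z => (abs_neg _).trans_le (hC z)) s

theorem hasDerivAt_integral_mul_div_mul_gaussianPDFReal_comp_sub (hv : v ≠ 0)
    (hψ : AEStronglyMeasurable ψ) (hψM : ∀ u, |ψ u| ≤ M) (s : ℝ) :
    HasDerivAt (fun r => ∫ u, ψ u * ((u - r) / v * gaussianPDFReal 0 v (u - r)))
      (∫ u, ψ u * (((u - s) ^ 2 - v) / v ^ 2 * gaussianPDFReal 0 v (u - s))) s := by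
  obtain ⟨C, hC⟩ :=
    exists_abs_mul_gaussianPDFReal_le hv (abs_sq_sub_div_sq_le_mul_one_add_sq v)
  simpa [integral_neg] using hasDerivAt_integral_mul_comp_sub hψ hψM
    (hasDerivAt_div_mul_gaussianPDFReal v)
    (integrable_mul_gaussianPDFReal hv (by fun_prop) (abs_div_le_mul_one_add_sq v))
    (by positivity) (fun z => (abs_neg _).trans_le (hC z)) s

lemma integral_mul_hermite_gaussianReal (hv : v ≠ 0)
    (hψ : AEStronglyMeasurable ψ) (hψM : ∀ u, |ψ u| ≤ M) (a b : ℝ) :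
    (∫ u, ψ u * ((u ^ 2 - v) / v ^ 2 * gaussianPDFReal 0 v u)) * a +
        (∫ u, ψ u * (u / v * gaussianPDFReal 0 v u)) * b =
      ∫ w, ψ w * (a * ((w ^ 2 - v) / v ^ 2) + b * (w / v)) ∂gaussianReal 0 v := by
  have hint₁ := (integrable_mul_gaussianPDFReal hv (by fun_prop)
    (abs_div_le_mul_one_add_sq v)).bdd_mul hψ (ae_of_all _ hψM)
  have hint₂ := (integrable_mul_gaussianPDFReal hv (by fun_prop)
    (abs_sq_sub_div_sq_le_mul_one_add_sq v)).bdd_mul hψ (ae_of_all _ hψM)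
  rw [← integral_mul_const, ← integral_mul_const,
    ← integral_add (hint₂.mul_const _) (hint₁.mul_const _),
    integral_gaussianReal_eq_integral_smul hv]
  congr 1 with w
  rw [smul_eq_mul]
  ring

end GaussianKernel

lemma integral_gaussianReal_comp_add {v : ℝ≥0} (hv : v ≠ 0) (f : ℝ → ℝ) (s : ℝ) :
    ∫ w, f (w + s) ∂gaussianReal 0 v = ∫ u, f u * gaussianPDFReal 0 v (u - s) := by
  rw [integral_gaussianReal_eq_integral_smul hv,
    ← integral_add_right_eq_self (fun u => f u * gaussianPDFReal 0 v (u - s)) s]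
  simp [mul_comm]

theorem differentiableAt_and_hasDerivAt_deriv_of_eventuallyEq_comp
    {F G G' G'' h h' : ℝ → ℝ} {x h'' : ℝ} (hF : F =ᶠ[𝓝 x] G ∘ h)
    (hG : ∀ s, HasDerivAt G (G' s) s) (hG' : ∀ s, HasDerivAt G' (G'' s) s)
    (hh : ∀ᶠ y in 𝓝 x, HasDerivAt h (h' y) y) (hh' : HasDerivAt h' h'' x) :
    DifferentiableAt ℝ F x ∧
      HasDerivAt (deriv F) (G'' (h x) * h' x ^ 2 + G' (h x) * h'') x := by
  have hF' : ∀ᶠ y in 𝓝 x, HasDerivAt F (G' (h y) * h' y) y := by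
    filter_upwards [hF.eventuallyEq_nhds, hh] with y hFy hhy
    exact ((hG (h y)).comp y hhy).congr_of_eventuallyEq hFy
  refine ⟨hF'.self_of_nhds.differentiableAt, ?_⟩
  have hG'h : HasDerivAt (fun y => G' (h y)) (G'' (h x) * h' x) x :=
    (hG' (h x)).comp x hh.self_of_nhds
  refine ((hG'h.mul hh').congr_of_eventuallyEq ?_).congr_deriv (by ring)
  filter_upwards [hF'] with y hy using hy.deriv

section LognormalShift

variable {t c1 c2 x : ℝ}

noncomputable def lognormalShift (c1 c2 x y : ℝ) : ℝ := log ((c1 + c2 * y) / (c1 + c2 * x)) / c2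

lemma lognormalShift_self (hx : c1 + c2 * x ≠ 0) : lognormalShift c1 c2 x x = 0 := by
  simp [lognormalShift, div_self hx]

lemma eventually_pos_div_linear (hx : c1 + c2 * x ≠ 0) :
    ∀ᶠ y in 𝓝 x, 0 < (c1 + c2 * y) / (c1 + c2 * x) :=
  ((by fun_prop : Continuous fun y => (c1 + c2 * y) / (c1 + c2 * x)).tendsto x).eventually
    (lt_mem_nhds (by simp [div_self hx]))

lemma eventually_lognormal_eq_comp_add (hc2 : c2 ≠ 0) (hx : c1 + c2 * x ≠ 0) :
    ∀ᶠ y in 𝓝 x, ∀ w,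
      -(c1 / c2) + (c1 / c2 + y) * exp (-(c2 ^ 2 / 2) * t + c2 * w) =
        -(c1 / c2) + (c1 / c2 + x) *
          exp (-(c2 ^ 2 / 2) * t + c2 * (w + lognormalShift c1 c2 x y)) := by
  filter_upwards [eventually_pos_div_linear hx] with y hy w
  rw [lognormalShift, mul_add, mul_div_cancel₀ _ hc2, ← add_assoc, exp_add (_ + _), exp_log hy]
  field_simp

lemma eventually_hasDerivAt_lognormalShift (hc2 : c2 ≠ 0) (hx : c1 + c2 * x ≠ 0) :
    ∀ᶠ y in 𝓝 x, HasDerivAt (lognormalShift c1 c2 x) (c1 + c2 * y)⁻¹ y := by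
  filter_upwards [eventually_pos_div_linear hx] with y hy
  have hy0 : c1 + c2 * y ≠ 0 := fun h0 => by simp [h0] at hy
  refine ((((((hasDerivAt_id' y).const_mul c2).const_add c1).div_const _).log
    hy.ne').div_const c2).congr_deriv ?_
  field_simp

end LognormalShift

/-- Second-order automatic differentiation weight for log-normal dynamics: with
`X̄ˣ_t = -c₁/c₂ + (c₁/c₂ + x) exp(-c₂²t/2 + c₂ W_t)` and `W_t ∼ N(0,t)`,
for bounded continuous `φ`, the map `x ↦ E[φ(X̄ˣ_t)]` is twice differentiable at `x` and
`d²/dx² E[φ(X̄ˣ_t)] = E[φ(X̄ˣ_t) (c₁+c₂x)⁻² (-c₂ W_t/t + (W_t² - t)/t²)]`. -/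
theorem lognormal_ibp_second_order
    (t c1 c2 x : ℝ) (ht : 0 < t) (hc2 : c2 ≠ 0) (hx : c1 + c2 * x ≠ 0)
    (φ : ℝ → ℝ) (hφc : Continuous φ) (hφb : ∃ M, ∀ y, |φ y| ≤ M)
    (X : ℝ → ℝ → ℝ)
    (hX : ∀ y w, X y w = -(c1 / c2) + (c1 / c2 + y) * Real.exp (-(c2 ^ 2 / 2) * t + c2 * w)) :
    DifferentiableAt ℝ (fun y => ∫ w, φ (X y w) ∂(gaussianReal 0 ⟨t, ht.le⟩)) x ∧
    HasDerivAt (fun y => deriv (fun z => ∫ w, φ (X z w) ∂(gaussianReal 0 ⟨t, ht.le⟩)) y)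
      (∫ w, φ (X x w) * (1 / (c1 + c2 * x) ^ 2) *
        (-c2 * (w / t) + (w ^ 2 - t) / t ^ 2) ∂(gaussianReal 0 ⟨t, ht.le⟩)) x := by
  obtain ⟨M, hM⟩ := hφb
  obtain rfl : X = fun y w => -(c1 / c2) + (c1 / c2 + y) * exp (-(c2 ^ 2 / 2) * t + c2 * w) := by
    ext y w; exact hX y w
  set v : ℝ≥0 := ⟨t, ht.le⟩
  have hv : v ≠ 0 := fun h => ht.ne' (congrArg NNReal.toReal h)
  set ψ : ℝ → ℝ := fun u => φ (-(c1 / c2) + (c1 / c2 + x) * exp (-(c2 ^ 2 / 2) * t + c2 * u))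
  have hψ : AEStronglyMeasurable ψ := (hφc.comp (by fun_prop)).aestronglyMeasurable
  have hψM : ∀ u, |ψ u| ≤ M := fun u => hM _
  have hF : (fun y => ∫ w, φ (-(c1 / c2) + (c1 / c2 + y) * exp (-(c2 ^ 2 / 2) * t + c2 * w))
      ∂gaussianReal 0 v) =ᶠ[𝓝 x]
      (fun r => ∫ u, ψ u * gaussianPDFReal 0 v (u - r)) ∘ lognormalShift c1 c2 x := by
    filter_upwards [eventually_lognormal_eq_comp_add (t := t) hc2 hx] with y hy
    simp only [Function.comp, ← integral_gaussianReal_comp_add hv, hy, ψ]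
  have hinv : HasDerivAt (fun y => (c1 + c2 * y)⁻¹) (-c2 / (c1 + c2 * x) ^ 2) x :=
    ((((hasDerivAt_id' x).const_mul c2).const_add c1).inv hx).congr_deriv (by ring)
  refine (differentiableAt_and_hasDerivAt_deriv_of_eventuallyEq_comp hF
    (hasDerivAt_integral_mul_gaussianPDFReal_comp_sub hv hψ hψM)
    (hasDerivAt_integral_mul_div_mul_gaussianPDFReal_comp_sub hv hψ hψM)
    (eventually_hasDerivAt_lognormalShift hc2 hx) hinv).imp_right fun hD => hD.congr_deriv ?_
  simp only [lognormalShift_self hx, sub_zero]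
  rw [integral_mul_hermite_gaussianReal hv hψ hψM]
  congr 1 with w
  change _ = ψ w * _ * _
  rw [show (v : ℝ) = t from rfl]
  field_simp
  ring
end

section
/- Let $t \in (0,T]$, $c_1, c_2 \in \mathbb{R}$, $x \in \mathbb{R}$, and $\phi \in C^2_b(\mathbb{R})$ (bounded with bounded first and second derivatives). Let $W_t \sim \mathcal{N}(0,t)$ and define $\overline{X}^x_t := -\frac{c_1}{c_2} + (\frac{c_1}{c_2}+x)e^{-c_2^2 t/2 + c_2 W_t}$ if $c_2 \neq 0$ and $\overline{X}^x_t := x + c_1 W_t$ if $c_2 = 0$. Then there exists a constant $C$ depending only on $T$, $c_2$, and the bounds on $\phi'$, such that for all $(t, x) \in (0,T] \times \mathbb{R}$, $\mathbb{E}\Big[\big(\phi(\overline{X}^x_t) - \phi(x)\big)^2 \big(\tfrac{W_t}{t}\big)^2\Big] \le C\,(c_1 + c_2 x)^2$. -/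
/-!
Since `|φ'| ≤ M`, `φ` is `M`-Lipschitz, so it suffices to bound `E[(X̄ˣ_t - x)² (W_t/t)²]`.
For `c₂ = 0` this is `c₁² E[W_t⁴] / t² = 3 c₁²`. For `c₂ ≠ 0`,
`X̄ˣ_t - x = (c₁ + c₂ x) / c₂ · (e^{c₂ W_t - c₂² t/2} - 1)`, and the tilted moments
`E[W_t² e^{λ W_t}] = (t + λ² t²) e^{λ² t/2}`, read off from the second derivative of the
moment generating function `e^{λ² t/2}`, give
`E[(e^{c₂ W_t - c₂² t/2} - 1)² W_t²] = e^{c₂² t} (t + 4 c₂² t²) - 2 (t + c₂² t²) + t`,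
which is at most `5 c₂² t² e^{c₂² t}` because `e^s - 1 ≤ s e^s`.
-/

open MeasureTheory ProbabilityTheory Real NNReal

lemma deriv_mul_exp_mul_sq_div_two {p p' q : ℝ → ℝ} (a : ℝ) (hp : ∀ l, HasDerivAt p (p' l) l)
    (hq : ∀ l, q l = p' l + a * l * p l) :
    deriv (fun l ↦ p l * exp (a * l ^ 2 / 2)) = fun l ↦ q l * exp (a * l ^ 2 / 2) := by
  funext l
  have he : HasDerivAt (fun l ↦ a * l ^ 2 / 2) (a * l) l := by
    refine (((hasDerivAt_pow 2 l).const_mul a).div_const 2).congr_deriv ?_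
    norm_num
    ring
  rw [((hp l).fun_mul he.exp).deriv, hq]
  ring

lemma iteratedDeriv_two_mgf_id_gaussianReal (v : ℝ≥0) :
    iteratedDeriv 2 (mgf id (gaussianReal 0 v)) =
      fun l ↦ (v + v ^ 2 * l ^ 2) * exp (v * l ^ 2 / 2) := by
  have hmgf : mgf id (gaussianReal 0 v) = fun l ↦ 1 * exp (v * l ^ 2 / 2) := by
    simp [mgf_id_gaussianReal]
  have d1 : deriv (fun l ↦ 1 * exp (v * l ^ 2 / 2)) = fun l ↦ v * l * exp (v * l ^ 2 / 2) :=
    deriv_mul_exp_mul_sq_div_two _ (fun l ↦ hasDerivAt_const l 1) (fun l ↦ by ring)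
  have d2 : deriv (fun l ↦ v * l * exp (v * l ^ 2 / 2)) =
      fun l ↦ (v + v ^ 2 * l ^ 2) * exp (v * l ^ 2 / 2) :=
    deriv_mul_exp_mul_sq_div_two _ (fun l ↦ (hasDerivAt_id' l).const_mul (v : ℝ)) (fun l ↦ by ring)
  rw [iteratedDeriv_succ, iteratedDeriv_one, hmgf, d1, d2]

lemma integrable_pow_mul_exp_gaussianReal (v : ℝ≥0) (n : ℕ) (l : ℝ) :
    Integrable (fun w ↦ w ^ n * exp (l * w)) (gaussianReal 0 v) :=
  integrable_pow_mul_exp_of_mem_interior_integrableExpSet (X := id) (by simp) n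

lemma integral_sq_mul_exp_gaussianReal (v : ℝ≥0) (l : ℝ) :
    ∫ w, w ^ 2 * exp (l * w) ∂gaussianReal 0 v = (v + v ^ 2 * l ^ 2) * exp (v * l ^ 2 / 2) := by
  have := iteratedDeriv_mgf (X := id) (μ := gaussianReal 0 v) (t := l) (by simp) 2
  rw [iteratedDeriv_two_mgf_id_gaussianReal] at this
  simpa using this.symm

lemma integral_pow_four_gaussianReal (v : ℝ≥0) :
    ∫ w, w ^ 4 ∂gaussianReal 0 v = 3 * v ^ 2 := by
  have d3 : deriv (fun l ↦ (v + v ^ 2 * l ^ 2) * exp (v * l ^ 2 / 2)) =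
      fun l ↦ (3 * v ^ 2 * l + v ^ 3 * l ^ 3) * exp (v * l ^ 2 / 2) :=
    deriv_mul_exp_mul_sq_div_two _
      (fun l ↦ ((hasDerivAt_pow 2 l).const_mul ((v : ℝ) ^ 2)).const_add (v : ℝ))
      (fun l ↦ by norm_num; ring)
  have d4 : deriv (fun l ↦ (3 * v ^ 2 * l + v ^ 3 * l ^ 3) * exp (v * l ^ 2 / 2)) 0 =
      (3 * v ^ 2 : ℝ) := by
    rw [deriv_mul_exp_mul_sq_div_two _
      (fun l ↦ ((hasDerivAt_id' l).const_mul (3 * (v : ℝ) ^ 2)).fun_add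
        ((hasDerivAt_pow 3 l).const_mul ((v : ℝ) ^ 3))) (fun l ↦ rfl)]
    simp
  have := iteratedDeriv_mgf_zero (X := id) (μ := gaussianReal 0 v) (by simp) 4
  rw [iteratedDeriv_succ, iteratedDeriv_succ, iteratedDeriv_two_mgf_id_gaussianReal, d3, d4]
    at this
  simpa using this.symm

lemma sq_exp_sub_one_mul_sq (b v w : ℝ) :
    (exp (-(b ^ 2 / 2) * v + b * w) - 1) ^ 2 * w ^ 2 =
      exp (-(b ^ 2 * v)) * (w ^ 2 * exp (2 * b * w))
        - 2 * exp (-(b ^ 2 / 2) * v) * (w ^ 2 * exp (b * w)) + w ^ 2 * exp (0 * w) := by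
  have h2 : exp (-(b ^ 2 / 2) * v + b * w) ^ 2 = exp (-(b ^ 2 * v)) * exp (2 * b * w) := by
    rw [sq, ← exp_add, ← exp_add]
    ring_nf
  have h1 : exp (-(b ^ 2 / 2) * v + b * w) = exp (-(b ^ 2 / 2) * v) * exp (b * w) := exp_add _ _
  rw [zero_mul, exp_zero]
  linear_combination w ^ 2 * h2 - 2 * w ^ 2 * h1

lemma integrable_sq_exp_sub_one_mul_sq (v : ℝ≥0) (b : ℝ) :
    Integrable (fun w ↦ (exp (-(b ^ 2 / 2) * v + b * w) - 1) ^ 2 * w ^ 2) (gaussianReal 0 v) := by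
  simp_rw [sq_exp_sub_one_mul_sq]
  exact (((integrable_pow_mul_exp_gaussianReal v 2 _).const_mul _).sub
    ((integrable_pow_mul_exp_gaussianReal v 2 _).const_mul _)).add
    (integrable_pow_mul_exp_gaussianReal v 2 _)

lemma integral_sq_exp_sub_one_mul_sq (v : ℝ≥0) (b : ℝ) :
    ∫ w, (exp (-(b ^ 2 / 2) * v + b * w) - 1) ^ 2 * w ^ 2 ∂gaussianReal 0 v =
      exp (b ^ 2 * v) * (v + 4 * b ^ 2 * v ^ 2) - 2 * (v + b ^ 2 * v ^ 2) + v := by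
  have hI := integrable_pow_mul_exp_gaussianReal v 2
  have hdiff : Integrable (fun w ↦ exp (-(b ^ 2 * v)) * (w ^ 2 * exp (2 * b * w))
      - 2 * exp (-(b ^ 2 / 2) * v) * (w ^ 2 * exp (b * w))) (gaussianReal 0 v) :=
    ((hI _).const_mul _).sub ((hI _).const_mul _)
  simp_rw [sq_exp_sub_one_mul_sq]
  rw [integral_add hdiff (hI 0), integral_sub ((hI _).const_mul _) ((hI _).const_mul _),
    integral_const_mul, integral_const_mul, integral_sq_mul_exp_gaussianReal,
    integral_sq_mul_exp_gaussianReal, integral_sq_mul_exp_gaussianReal]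
  have h1 : exp (-(b ^ 2 * v)) * exp (v * (2 * b) ^ 2 / 2) = exp (b ^ 2 * v) := by
    rw [← exp_add]; ring_nf
  have h2 : exp (-(b ^ 2 / 2) * v) * exp (v * b ^ 2 / 2) = 1 := by
    rw [← exp_add, ← exp_zero]; ring_nf
  simp only [zero_pow two_ne_zero, mul_zero, zero_div, exp_zero]
  linear_combination (v + 4 * b ^ 2 * v ^ 2) * h1 - 2 * (v + b ^ 2 * v ^ 2) * h2

lemma integral_sq_exp_sub_one_mul_sq_le (v : ℝ≥0) (b : ℝ) :
    ∫ w, (exp (-(b ^ 2 / 2) * v + b * w) - 1) ^ 2 * w ^ 2 ∂gaussianReal 0 v ≤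
      5 * b ^ 2 * v ^ 2 * exp (b ^ 2 * v) := by
  rw [integral_sq_exp_sub_one_mul_sq]
  have hx : exp (b ^ 2 * v) * (1 - b ^ 2 * v) ≤ 1 := by
    calc exp (b ^ 2 * v) * (1 - b ^ 2 * v) ≤ exp (b ^ 2 * v) * exp (-(b ^ 2 * v)) := by
          gcongr; exact one_sub_le_exp_neg _
      _ = 1 := by rw [← exp_add, add_neg_cancel, exp_zero]
  have hv : (0 : ℝ) ≤ v := v.2
  nlinarith [exp_pos (b ^ 2 * v), mul_nonneg hv (sq_nonneg b),
    mul_nonneg (mul_nonneg hv hv) (sq_nonneg b)]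

lemma integral_sq_sub_mul_le_of_lipschitzWith {α : Type*} [MeasurableSpace α] {μ : Measure α}
    {φ : ℝ → ℝ} {K : ℝ≥0} (hφ : LipschitzWith K φ) {f g : α → ℝ} (x : ℝ) (hg : ∀ a, 0 ≤ g a)
    (hint : Integrable (fun a ↦ (f a - x) ^ 2 * g a) μ) :
    ∫ a, (φ (f a) - φ x) ^ 2 * g a ∂μ ≤ K ^ 2 * ∫ a, (f a - x) ^ 2 * g a ∂μ := by
  rw [← integral_const_mul]
  refine integral_mono_of_nonneg (.of_forall fun a ↦ by have := hg a; positivity)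
    (hint.const_mul _) (.of_forall fun a ↦ ?_)
  have hlip : |φ (f a) - φ x| ≤ K * |f a - x| := by
    simpa only [Real.dist_eq] using hφ.dist_le_mul (f a) x
  have hsq : (φ (f a) - φ x) ^ 2 ≤ K ^ 2 * (f a - x) ^ 2 := by
    rw [← sq_abs, ← sq_abs (f a - x), ← mul_pow]
    exact pow_le_pow_left₀ (abs_nonneg _) hlip 2
  simpa only [mul_assoc] using mul_le_mul_of_nonneg_right hsq (hg a)

/-- The solution `X̄ˣ_t` of `dX = (c₁ + c₂ X) dW`, `X₀ = x`, as a function of `W_t = w`. -/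
noncomputable def linearSDESolution (c1 c2 x t w : ℝ) : ℝ :=
  if c2 = 0 then x + c1 * w
  else -(c1 / c2) + (c1 / c2 + x) * exp (-(c2 ^ 2 / 2) * t + c2 * w)

lemma linearSDESolution_zero_sub (c1 x t w : ℝ) : linearSDESolution c1 0 x t w - x = c1 * w := by
  simp [linearSDESolution]

lemma linearSDESolution_sub {c2 : ℝ} (hc2 : c2 ≠ 0) (c1 x t w : ℝ) :
    linearSDESolution c1 c2 x t w - x =
      (c1 + c2 * x) / c2 * (exp (-(c2 ^ 2 / 2) * t + c2 * w) - 1) := by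
  rw [linearSDESolution, if_neg hc2]
  field_simp
  ring

lemma integral_sq_linearSDESolution_sub_mul_sq_div_le (c1 c2 x : ℝ) {v : ℝ≥0} (hv : v ≠ 0) :
    Integrable (fun w ↦ (linearSDESolution c1 c2 x v w - x) ^ 2 * (w / v) ^ 2)
        (gaussianReal 0 v) ∧
      ∫ w, (linearSDESolution c1 c2 x v w - x) ^ 2 * (w / v) ^ 2 ∂gaussianReal 0 v ≤
        5 * exp (c2 ^ 2 * v) * (c1 + c2 * x) ^ 2 := by
  have hv' : (v : ℝ) ≠ 0 := by exact_mod_cast hv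
  rcases eq_or_ne c2 0 with rfl | hc2
  · have heq : ∀ w, (linearSDESolution c1 0 x v w - x) ^ 2 * (w / v) ^ 2 =
        c1 ^ 2 / v ^ 2 * w ^ 4 := by
      intro w
      rw [linearSDESolution_zero_sub]
      ring
    have hI : Integrable (fun w : ℝ ↦ w ^ 4) (gaussianReal 0 v) := by
      simpa using integrable_pow_mul_exp_gaussianReal v 4 0
    simp_rw [heq]
    refine ⟨hI.const_mul _, ?_⟩
    rw [integral_const_mul, integral_pow_four_gaussianReal]
    calc c1 ^ 2 / v ^ 2 * (3 * v ^ 2) = 3 * c1 ^ 2 := by field_simp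
      _ ≤ 5 * exp (0 ^ 2 * v) * (c1 + 0 * x) ^ 2 := by
          norm_num
          nlinarith [sq_nonneg c1]
  · have heq : ∀ w, (linearSDESolution c1 c2 x v w - x) ^ 2 * (w / v) ^ 2 =
        ((c1 + c2 * x) / c2) ^ 2 / v ^ 2 *
          ((exp (-(c2 ^ 2 / 2) * v + c2 * w) - 1) ^ 2 * w ^ 2) := by
      intro w
      rw [linearSDESolution_sub hc2]
      ring
    simp_rw [heq]
    refine ⟨(integrable_sq_exp_sub_one_mul_sq v c2).const_mul _, ?_⟩
    rw [integral_const_mul]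
    calc _ ≤ ((c1 + c2 * x) / c2) ^ 2 / v ^ 2 * (5 * c2 ^ 2 * v ^ 2 * exp (c2 ^ 2 * v)) := by
          gcongr
          exact integral_sq_exp_sub_one_mul_sq_le v c2
      _ = 5 * exp (c2 ^ 2 * v) * (c1 + c2 * x) ^ 2 := by
          field_simp

theorem lognormal_first_weight_variance_bound_general
    (T c2 : ℝ) (φ : ℝ → ℝ) (hφ : ContDiff ℝ 2 φ)
    (M : ℝ) (hφb : ∀ y, |φ y| ≤ M ∧ |deriv φ y| ≤ M ∧ |deriv (deriv φ) y| ≤ M) :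
    ∃ C > 0, ∀ c1 x : ℝ, ∀ t : ℝ, ∀ ht : t ∈ Set.Ioc (0 : ℝ) T,
      (∫ w, (φ (if c2 = 0 then x + c1 * w
            else -(c1 / c2) + (c1 / c2 + x) * Real.exp (-(c2 ^ 2 / 2) * t + c2 * w))
          - φ x) ^ 2 * (w / t) ^ 2 ∂(gaussianReal 0 ⟨t, ht.1.le⟩))
        ≤ C * (c1 + c2 * x) ^ 2 := by
  have hM : 0 ≤ M := (abs_nonneg _).trans (hφb 0).1
  have hlip : LipschitzWith ⟨M, hM⟩ φ :=
    lipschitzWith_of_nnnorm_deriv_le (hφ.differentiable (by norm_num)) fun y ↦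
      NNReal.coe_le_coe.mp (by rw [coe_nnnorm, Real.norm_eq_abs]; exact (hφb y).2.1)
  refine ⟨M ^ 2 * (5 * exp (c2 ^ 2 * T)) + 1, by positivity, fun c1 x t ht ↦ ?_⟩
  set v : ℝ≥0 := ⟨t, ht.1.le⟩
  have hv : v ≠ 0 := ne_of_gt ht.1
  obtain ⟨hint, hle⟩ := integral_sq_linearSDESolution_sub_mul_sq_div_le c1 c2 x hv
  calc _ ≤ M ^ 2 * ∫ w, (linearSDESolution c1 c2 x v w - x) ^ 2 * (w / v) ^ 2
          ∂gaussianReal 0 v :=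
        integral_sq_sub_mul_le_of_lipschitzWith hlip x (fun w ↦ sq_nonneg _) hint
    _ ≤ M ^ 2 * (5 * exp (c2 ^ 2 * T) * (c1 + c2 * x) ^ 2) := by
        gcongr
        exact hle.trans (by gcongr; exact ht.2)
    _ ≤ _ := by nlinarith [sq_nonneg (c1 + c2 * x)]

/-- For `φ ∈ C²_b(ℝ)` and the linear-SDE solution
`X̄ˣ_t = -c₁/c₂ + (c₁/c₂+x)e^{-c₂²t/2 + c₂W_t}` (resp. `x + c₁ W_t` if `c₂ = 0`),
there is a constant `C` depending only on `T`, `c₂` and the bounds on `φ` such that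
for all `c₁`, `x` and `t ∈ (0,T]`,
`E[(φ(X̄ˣ_t) - φ(x))² (W_t/t)²] ≤ C (c₁ + c₂ x)²`. -/
theorem lognormal_first_weight_variance_bound
    (T c2 : ℝ) (hT : 0 < T) (φ : ℝ → ℝ) (hφ : ContDiff ℝ 2 φ)
    (M : ℝ) (hφb : ∀ y, |φ y| ≤ M ∧ |deriv φ y| ≤ M ∧ |deriv (deriv φ) y| ≤ M) :
    ∃ C > 0, ∀ c1 x : ℝ, ∀ t : ℝ, ∀ ht : t ∈ Set.Ioc (0 : ℝ) T,
      (∫ w, (φ (if c2 = 0 then x + c1 * w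
            else -(c1 / c2) + (c1 / c2 + x) * Real.exp (-(c2 ^ 2 / 2) * t + c2 * w))
          - φ x) ^ 2 * (w / t) ^ 2 ∂(gaussianReal 0 ⟨t, ht.1.le⟩))
        ≤ C * (c1 + c2 * x) ^ 2 :=
  lognormal_first_weight_variance_bound_general T c2 φ hφ M hφb
end

section
/- Let $d \ge 1$, $n \ge 1$, and $\bar\mu : [0,T]\times\mathbb{R}^d \to \mathbb{R}^d$ be such that $x \mapsto \bar\mu(t,x)$ is $n$ times differentiable with all derivatives up to order $n$ uniformly bounded (uniformly in $t$). Let $\pi = (0 = s_0 < s_1 < \cdots < s_m = T)$ be any partition of $[0,T]$ and define the Euler scheme $X^{\pi,x}_0 = x$, $X^{\pi,x}_{k+1} = X^{\pi,x}_k + \bar\mu(s_k, X^{\pi,x}_k)(s_{k+1}-s_k) + (W_{s_{k+1}} - W_{s_k})$. Then $x \mapsto X^{\pi,x}_k$ is $n$ times differentiable for each $k$, and there exists a constant $C$ depending only on $T$, $n$, $d$ and the derivative bounds of $\bar\mu$ (but not on the partition $\pi$) such that $\max_{1\le\ell\le n}\max_{i \in \{1,\dots,d\}^\ell}\max_{0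 \le k \le m} |\partial^\ell_{x,i} X^{\pi,x}_k| \le C$ almost surely. -/
/-! Each Euler step `y ↦ y + h • μ̄(s, y) + w` changes the `ℓ`-th derivative of the flow by at
most `h ℓ! K D^ℓ` when the derivatives of orders `1, …, ℓ` of the flow are bounded by `D, …, D^ℓ`
(Faà di Bruno). Since `(1 + h ℓ! K) D^ℓ ≤ (D exp (n! K h))^ℓ`, induction on `k` gives the bound
`exp (n! K s_k)^ℓ` after `k` steps, and the partition enters only through `s_m = T`. -/

open Nat Real

section IteratedFDeriv

variable {𝕜 : Type*} [NontriviallyNormedField 𝕜]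
  {E F G : Type*} [NormedAddCommGroup E] [NormedSpace 𝕜 E] [NormedAddCommGroup F] [NormedSpace 𝕜 F]
  [NormedAddCommGroup G] [NormedSpace 𝕜 G]

theorem iteratedFDeriv_add_const {i : ℕ} (hi : i ≠ 0) (f : E → F) (c : F) :
    iteratedFDeriv 𝕜 i (fun y => f y + c) = iteratedFDeriv 𝕜 i f := by
  obtain ⟨j, rfl⟩ := exists_eq_succ_of_ne_zero hi
  ext1 x
  simp only [iteratedFDeriv_succ_eq_comp_right, fderiv_add_const]

theorem norm_iteratedFDeriv_id_le_one {i : ℕ} (hi : i ≠ 0) (x : E) :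
    ‖iteratedFDeriv 𝕜 i (fun y : E => y) x‖ ≤ 1 := by
  obtain ⟨j, rfl⟩ := exists_eq_succ_of_ne_zero hi
  have hD : fderiv 𝕜 (fun y : E => y) = fun _ => ContinuousLinearMap.id 𝕜 E :=
    funext fun _ => fderiv_fun_id
  rw [← norm_iteratedFDeriv_fderiv, hD]
  rcases eq_or_ne j 0 with rfl | hj
  · simpa using ContinuousLinearMap.norm_id_le
  · simp [iteratedFDeriv_const_of_ne hj]

/-- Subtracting the constant `g (f x)` kills the zeroth-order term of Faà di Bruno's bound. -/
theorem norm_iteratedFDeriv_comp_le_of_bounds {g : F → G} {f : E → F} {n : ℕ} (hn : n ≠ 0)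
    (hg : ContDiff 𝕜 n g) (hf : ContDiff 𝕜 n f) (x : E) {K D : ℝ}
    (hgK : ∀ i, 1 ≤ i → i ≤ n → ‖iteratedFDeriv 𝕜 i g (f x)‖ ≤ K)
    (hfD : ∀ i, 1 ≤ i → i ≤ n → ‖iteratedFDeriv 𝕜 i f x‖ ≤ D ^ i) :
    ‖iteratedFDeriv 𝕜 n (g ∘ f) x‖ ≤ n ! * K * D ^ n := by
  set g₀ : F → G := fun y => g y + -g (f x)
  have hK : 0 ≤ K := (norm_nonneg _).trans (hgK n (one_le_iff_ne_zero.2 hn) le_rfl)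
  have hg₀K : ∀ i, i ≤ n → ‖iteratedFDeriv 𝕜 i g₀ (f x)‖ ≤ K := by
    intro i hi
    rcases eq_or_ne i 0 with rfl | hi₀
    · simpa [g₀] using hK
    · rw [iteratedFDeriv_add_const hi₀]
      exact hgK i (one_le_iff_ne_zero.2 hi₀) hi
  rw [← iteratedFDeriv_add_const hn (g ∘ f) (-g (f x))]
  exact norm_iteratedFDeriv_comp_le (hg.add contDiff_const) hf le_rfl x hg₀K hfD

end IteratedFDeriv

section EulerScheme

variable {E : Type*} [NormedAddCommGroup E] [NormedSpace ℝ E]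

theorem norm_iteratedFDeriv_eulerStep_le {b X : E → E} {n ℓ : ℕ} {K D h : ℝ}
    (hb : ContDiff ℝ n b) (hbK : ∀ y i, 1 ≤ i → i ≤ n → ‖iteratedFDeriv ℝ i b y‖ ≤ K)
    (hX : ContDiff ℝ n X) (hXD : ∀ i, 1 ≤ i → i ≤ n → ∀ x, ‖iteratedFDeriv ℝ i X x‖ ≤ D ^ i)
    (hh : 0 ≤ h) (w : E) (hℓ1 : 1 ≤ ℓ) (hℓn : ℓ ≤ n) (x : E) :
    ‖iteratedFDeriv ℝ ℓ (fun y => X y + h • b (X y) + w) x‖ ≤ (D * exp (n ! * K * h)) ^ ℓ := by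
  have hℓn' : (ℓ : WithTop ℕ∞) ≤ n := by exact_mod_cast hℓn
  have hXℓ : ContDiff ℝ ℓ X := hX.of_le hℓn'
  have hbXℓ : ContDiff ℝ ℓ (b ∘ X) := (hb.comp hX).of_le hℓn'
  have hsplit : iteratedFDeriv ℝ ℓ (fun y => X y + h • b (X y) + w) x
      = iteratedFDeriv ℝ ℓ X x + h • iteratedFDeriv ℝ ℓ (b ∘ X) x := by
    rw [iteratedFDeriv_add_const (by omega)]
    change iteratedFDeriv ℝ ℓ (fun y => X y + h • (b ∘ X) y) x = _
    rw [fun_iteratedFDeriv_add_apply hXℓ.contDiffAt (hbXℓ.const_smul h).contDiffAt]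
    exact congrArg _ (iteratedFDeriv_const_smul_apply' hbXℓ.contDiffAt)
  have hbX : ‖iteratedFDeriv ℝ ℓ (b ∘ X) x‖ ≤ ℓ ! * K * D ^ ℓ :=
    norm_iteratedFDeriv_comp_le_of_bounds (by omega) (hb.of_le hℓn') hXℓ x
      (fun i hi₁ hi => hbK _ i hi₁ (hi.trans hℓn)) (fun i hi₁ hi => hXD i hi₁ (hi.trans hℓn) x)
  have hK : 0 ≤ K := (norm_nonneg _).trans (hbK x ℓ hℓ1 hℓn)
  have hDℓ : 0 ≤ D ^ ℓ := (norm_nonneg _).trans (hXD ℓ hℓ1 hℓn x)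
  have hfact : (ℓ ! : ℝ) ≤ n ! := by exact_mod_cast factorial_le hℓn
  calc ‖iteratedFDeriv ℝ ℓ (fun y => X y + h • b (X y) + w) x‖
      ≤ ‖iteratedFDeriv ℝ ℓ X x‖ + h * ‖iteratedFDeriv ℝ ℓ (b ∘ X) x‖ := by
        rw [hsplit, ← norm_smul_of_nonneg hh]
        exact norm_add_le _ _
    _ ≤ D ^ ℓ + h * (ℓ ! * K * D ^ ℓ) := by gcongr; exact hXD ℓ hℓ1 hℓn x
    _ = D ^ ℓ * (1 + ℓ ! * K * h) := by ring
    _ ≤ D ^ ℓ * exp (n ! * K * h) := by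
        gcongr
        nlinarith [add_one_le_exp (n ! * K * h), mul_le_mul_of_nonneg_right hfact hK]
    _ ≤ D ^ ℓ * exp (n ! * K * h) ^ ℓ := by
        gcongr
        exact le_self_pow₀ (one_le_exp (by positivity)) (by omega)
    _ = (D * exp (n ! * K * h)) ^ ℓ := (mul_pow _ _ _).symm

theorem eulerScheme_contDiff_and_norm_iteratedFDeriv_le {b : ℝ → E → E} {n m : ℕ} {K : ℝ}
    (hb : ∀ t, ContDiff ℝ n (b t))
    (hbK : ∀ t y i, 1 ≤ i → i ≤ n → ‖iteratedFDeriv ℝ i (b t) y‖ ≤ K)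
    {s : ℕ → ℝ} (hs : ∀ k < m, s k ≤ s (k + 1)) (w : ℕ → E) {X : ℕ → E → E}
    (hX0 : ∀ x, X 0 x = x)
    (hX : ∀ k x, k < m → X (k + 1) x = X k x + (s (k + 1) - s k) • b (s k) (X k x) + w k) :
    ∀ k ≤ m, ContDiff ℝ n (X k) ∧ ∀ ℓ, 1 ≤ ℓ → ℓ ≤ n → ∀ x,
      ‖iteratedFDeriv ℝ ℓ (X k) x‖ ≤ exp (n ! * K * (s k - s 0)) ^ ℓ := by
  intro k
  induction k with
  | zero =>
    intro _
    rw [funext hX0]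
    refine ⟨contDiff_id, fun ℓ hℓ1 _ x => ?_⟩
    simpa using norm_iteratedFDeriv_id_le_one (𝕜 := ℝ) (by omega) x
  | succ k ih =>
    intro hk
    obtain ⟨hXk, hXkD⟩ := ih (by omega)
    have hstep : X (k + 1) = fun y => X k y + (s (k + 1) - s k) • b (s k) (X k y) + w k :=
      funext fun y => hX k y hk
    refine ⟨hstep ▸ (hXk.add (((hb _).comp hXk).const_smul _)).add contDiff_const,
      fun ℓ hℓ1 hℓn x => ?_⟩
    have hexp : exp (n ! * K * (s k - s 0)) * exp (n ! * K * (s (k + 1) - s k))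
        = exp (n ! * K * (s (k + 1) - s 0)) := by rw [← exp_add]; ring_nf
    rw [hstep, ← hexp]
    exact norm_iteratedFDeriv_eulerStep_le (hb _) (hbK _) hXk hXkD (sub_nonneg.2 (hs k hk))
      _ hℓ1 hℓn x

end EulerScheme

theorem euler_scheme_derivative_bound_general
    (d n : ℕ) (T : ℝ) (K : ℝ)
    (μb : ℝ → EuclideanSpace ℝ (Fin d) → EuclideanSpace ℝ (Fin d))
    (hsmooth : ∀ t, ContDiff ℝ n (μb t))
    (hbound : ∀ t x (ℓ : ℕ), 1 ≤ ℓ → ℓ ≤ n → ‖iteratedFDeriv ℝ ℓ (μb t) x‖ ≤ K) :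
    ∃ C : ℝ, ∀ (m : ℕ) (s : ℕ → ℝ), s 0 = 0 → s m = T → (∀ k < m, s k < s (k + 1)) →
      ∀ (w : ℕ → EuclideanSpace ℝ (Fin d))
        (X : ℕ → EuclideanSpace ℝ (Fin d) → EuclideanSpace ℝ (Fin d)),
        (∀ x, X 0 x = x) →
        (∀ k x, k < m → X (k + 1) x = X k x + (s (k + 1) - s k) • μb (s k) (X k x) + w k) →
        ∀ k ≤ m, ContDiff ℝ n (X k) ∧
          ∀ ℓ : ℕ, 1 ≤ ℓ → ℓ ≤ n → ∀ x, ‖iteratedFDeriv ℝ ℓ (X k) x‖ ≤ C := by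
  refine ⟨exp (n ! * K * T) ^ n, fun m s hs0 hsm hs w X hX0 hX k hk => ?_⟩
  have hmono : MonotoneOn s (Set.Iic m) :=
    monotoneOn_of_le_add_one Set.ordConnected_Iic fun a _ _ ha => (hs a ha).le
  obtain ⟨hXk, hXkD⟩ := eulerScheme_contDiff_and_norm_iteratedFDeriv_le hsmooth hbound
    (fun k hk => (hs k hk).le) w hX0 hX k hk
  refine ⟨hXk, fun ℓ hℓ1 hℓn x => (hXkD ℓ hℓ1 hℓn x).trans ?_⟩
  have hK : 0 ≤ K := (norm_nonneg _).trans (hbound 0 x ℓ hℓ1 hℓn)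
  have hsk0 : 0 ≤ s k := hs0 ▸ hmono (zero_le m) hk (zero_le k)
  have hskT : s k ≤ T := hsm ▸ hmono hk (Set.mem_Iic.2 le_rfl) hk
  calc exp (n ! * K * (s k - s 0)) ^ ℓ ≤ exp (n ! * K * T) ^ ℓ := by
        rw [hs0, sub_zero]; gcongr
    _ ≤ exp (n ! * K * T) ^ n :=
        pow_le_pow_right₀ (one_le_exp (mul_nonneg (by positivity) (hsk0.trans hskT))) hℓn

/-- Uniform bound on the derivatives (in the initial condition) of the Euler scheme:
if `x ↦ μ̄(t,x)` has bounded derivatives up to order `n` (uniformly in `t`), then for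
any partition `π` of `[0,T]` and any realization of the Brownian increments `w`, the
Euler scheme `X^{π,x}` is `n` times differentiable in `x`, with all derivatives up to
order `n` bounded by a constant `C` independent of the partition and of `w`. -/
theorem euler_scheme_derivative_bound
    (d n : ℕ) (hd : 1 ≤ d) (hn : 1 ≤ n) (T : ℝ) (hT : 0 < T) (K : ℝ)
    (μb : ℝ → EuclideanSpace ℝ (Fin d) → EuclideanSpace ℝ (Fin d))
    (hsmooth : ∀ t, ContDiff ℝ n (μb t))
    (hbound : ∀ t x (ℓ : ℕ), 1 ≤ ℓ → ℓ ≤ n → ‖iteratedFDeriv ℝ ℓ (μb t) x‖ ≤ K) :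
    ∃ C : ℝ, ∀ (m : ℕ) (s : ℕ → ℝ), s 0 = 0 → s m = T → (∀ k < m, s k < s (k + 1)) →
      ∀ (w : ℕ → EuclideanSpace ℝ (Fin d))
        (X : ℕ → EuclideanSpace ℝ (Fin d) → EuclideanSpace ℝ (Fin d)),
        (∀ x, X 0 x = x) →
        (∀ k x, k < m → X (k + 1) x = X k x + (s (k + 1) - s k) • μb (s k) (X k x) + w k) →
        ∀ k ≤ m, ContDiff ℝ n (X k) ∧
          ∀ ℓ : ℕ, 1 ≤ ℓ → ℓ ≤ n → ∀ x, ‖iteratedFDeriv ℝ ℓ (X k) x‖ ≤ C :=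
  euler_scheme_derivative_bound_general d n T K μb hsmooth hbound
end
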